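/- arXiv:2211.14687 — 2 statements merged into one kernel-verified Lean document; each statement's English description precedes it below -/
import Mathlib

section
/- Let S be a random subset of [n] (identified with its indicator vector in {0,1}^n) whose indicator vector is negatively dependent, and let S' be an independent copy of S. Then for any a ≥ 1, E[a^{|S ∩ S'|}] ≤ exp((a−1) · ∑_{i=1}^n P[i ∈ S]^2). -/
/-!
Writing `a = 1 + x`, expand `a ^ |S ∩ S'| = ∏ᵢ (1 + x 1_{i∈S} 1_{i∈S'})` as a sum over `A ⊆ [n]`
of `x ^ |A| 1_{A⊆S} 1_{A⊆S'}`. Since `S'` is an independent copy of `S`, each term has expectation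
`x ^ |A| P[A ⊆ S]²`, and negative dependence bounds `P[A ⊆ S]` by `∏_{i∈A} P[i ∈ S]`. Summing back
gives `∏ᵢ (1 + x P[i ∈ S]²) ≤ exp (x ∑ᵢ P[i ∈ S]²)`.
-/

open MeasureTheory Finset

theorem Finset.prod_one_add_mul_mul {ι R : Type*} [CommSemiring R] (s : Finset ι) (x : R)
    (u v : ι → R) :
    ∏ i ∈ s, (1 + x * (u i * v i)) = ∑ t ∈ s.powerset, x ^ #t * ((∏ i ∈ t, u i) * ∏ i ∈ t, v i) := by
  rw [prod_one_add]
  refine sum_congr rfl fun t _ => ?_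
  rw [prod_mul_distrib, prod_const, prod_mul_distrib]

theorem one_add_pow_card_inter_eq_prod {ι R : Type*} [Fintype ι] [DecidableEq ι] [CommSemiring R]
    (x : R) (s t : Finset ι) :
    (1 + x) ^ #(s ∩ t) =
      ∏ i, (1 + x * ((if i ∈ s then 1 else 0) * (if i ∈ t then 1 else 0))) := by
  have hfactor : ∀ i, 1 + x * ((if i ∈ s then 1 else 0) * (if i ∈ t then 1 else 0))
      = if i ∈ s ∩ t then 1 + x else 1 := by
    intro i
    by_cases hs : i ∈ s <;> by_cases ht : i ∈ t <;> simp [hs, ht]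
  rw [prod_congr rfl fun i _ => hfactor i, prod_ite_mem, univ_inter, prod_const]

theorem prod_ite_mem_mem_Icc {ι : Type*} [DecidableEq ι] (A s : Finset ι) :
    ∏ i ∈ A, (if i ∈ s then (1 : ℝ) else 0) ∈ Set.Icc 0 1 := by
  rw [prod_boole]
  split_ifs <;> simp

section

variable {Ω ι : Type*} [MeasurableSpace Ω] [DecidableEq ι] {μ : Measure Ω} {S : Ω → Finset ι}

theorem integrable_prod_ite_mem [IsFiniteMeasure μ] (hS : ∀ i, MeasurableSet {ω | i ∈ S ω})
    (A : Finset ι) :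
    Integrable (fun ω => ∏ i ∈ A, (if i ∈ S ω then (1 : ℝ) else 0)) μ := by
  refine (integrable_const (1 : ℝ)).mono'
    (Finset.measurable_prod _ fun i _ =>
      (measurable_const.ite (hS i) measurable_const)).aestronglyMeasurable ?_
  filter_upwards with ω
  obtain ⟨h0, h1⟩ := prod_ite_mem_mem_Icc A (S ω)
  rwa [Real.norm_eq_abs, abs_of_nonneg h0]

theorem integral_one_add_pow_card_inter_prod [Fintype ι] [IsFiniteMeasure μ]
    (hS : ∀ i, MeasurableSet {ω | i ∈ S ω}) (x : ℝ) :
    ∫ q, (1 + x) ^ #(S q.1 ∩ S q.2) ∂(μ.prod μ) =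
      ∑ A ∈ univ.powerset, x ^ #A *
        ((∫ ω, ∏ i ∈ A, (if i ∈ S ω then (1 : ℝ) else 0) ∂μ) *
          ∫ ω, ∏ i ∈ A, (if i ∈ S ω then (1 : ℝ) else 0) ∂μ) := by
  simp only [one_add_pow_card_inter_eq_prod, prod_one_add_mul_mul]
  rw [integral_finsetSum _ fun A _ =>
    ((integrable_prod_ite_mem hS A).mul_prod (integrable_prod_ite_mem hS A)).const_mul _]
  refine sum_congr rfl fun A _ => ?_
  rw [integral_const_mul]
  congr 1
  exact integral_prod_mul (f := fun ω => ∏ i ∈ A, if i ∈ S ω then (1 : ℝ) else 0)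
    (g := fun ω => ∏ i ∈ A, if i ∈ S ω then (1 : ℝ) else 0)

end

/-- If `S` is a negatively dependent random subset of `[n]` and `S'` an independent copy of `S`
(realized on the product space), then for any `a ≥ 1`,
`E[a^{|S ∩ S'|}] ≤ exp((a−1) ∑_i P[i ∈ S]²)`. -/
theorem nd_exponential_moment_bound {Ω : Type*} [MeasurableSpace Ω] (μ : Measure Ω)
    [IsProbabilityMeasure μ] (n : ℕ) (S : Ω → Finset (Fin n))
    (hmeas : ∀ i, MeasurableSet {ω | i ∈ S ω})
    (hND : ∀ A : Finset (Fin n),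
      ∫ ω, ∏ i ∈ A, (if i ∈ S ω then (1 : ℝ) else 0) ∂μ
        ≤ ∏ i ∈ A, (μ {ω | i ∈ S ω}).toReal)
    (a : ℝ) (ha : 1 ≤ a) :
    ∫ q, a ^ (S q.1 ∩ S q.2).card ∂(μ.prod μ)
      ≤ Real.exp ((a - 1) * ∑ i, ((μ {ω | i ∈ S ω}).toReal) ^ 2) := by
  obtain ⟨x, hx, rfl⟩ : ∃ x, 0 ≤ x ∧ a = 1 + x := ⟨a - 1, by linarith, by ring⟩
  set p : Fin n → ℝ := fun i => (μ {ω | i ∈ S ω}).toReal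
  calc ∫ q, (1 + x) ^ #(S q.1 ∩ S q.2) ∂(μ.prod μ)
      = ∑ A ∈ univ.powerset, x ^ #A *
          ((∫ ω, ∏ i ∈ A, (if i ∈ S ω then (1 : ℝ) else 0) ∂μ) *
            ∫ ω, ∏ i ∈ A, (if i ∈ S ω then (1 : ℝ) else 0) ∂μ) :=
        integral_one_add_pow_card_inter_prod hmeas x
    _ ≤ ∑ A ∈ univ.powerset, x ^ #A * ((∏ i ∈ A, p i) * ∏ i ∈ A, p i) := by
        gcongr with A <;> exact hND A
    _ = ∏ i, (1 + x * p i ^ 2) := by simp only [sq, prod_one_add_mul_mul]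
    _ ≤ Real.exp (∑ i, x * p i ^ 2) := Real.prod_one_add_le_exp_sum _ fun i => by positivity
    _ = Real.exp ((1 + x - 1) * ∑ i, p i ^ 2) := by rw [add_sub_cancel_left, mul_sum]
end

section
/- Let μ be a measure on {0,1}^n obtained by sampling a random subset S ⊆ [n] according to a law μ̃ whose indicator vector is negatively dependent, then, conditionally on S, sampling the coordinates in S by some arbitrary law φ_S and the coordinates outside S independently as i.i.d. Bernoulli(p). Let ν = Ber(p)^⊗n and a = max(1/p, 1/(1−p)). Then 4 d_TV(μ,ν)^2 ≤ exp((a−1) ∑_{i=1}^n P[i ∈ S]^2) − 1. -/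
/-!
Write `μ = ∑_S μ̃(S) μ_S`. Cauchy–Schwarz gives `4 d_TV(μ, ν)² ≤ χ²(μ ‖ ν) = ∑ μ² / ν - 1`, and
`∑ μ² / ν` expands into the pair terms `μ̃(S) μ̃(S') ∑ μ_S μ_{S'} / ν`. In a pair term the
Bernoulli factors off `S ∪ S'` integrate out, `φ_S` and `φ_{S'}` together contribute mass at
most one, and the Bernoulli factors of `ν` on `S ∩ S'` are left in the denominator, costing at
most `a ^ |S ∩ S'|`. Expanding `a ^ |I| = ∑_{B ⊆ I} (a - 1) ^ |B|` turns the sum of the pair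
bounds into `∑_B (a - 1) ^ |B| P[B ⊆ S]²`, which negative dependence bounds by
`∏_i (1 + (a - 1) P[i ∈ S]²) ≤ exp ((a - 1) ∑_i P[i ∈ S]²)`.
-/

open Finset

namespace BoolCube

variable {ι : Type*}

def bernoulliWeight (p : ℝ) (T : Finset ι) (x : ι → Bool) : ℝ :=
  ∏ i ∈ T, if x i then p else 1 - p

theorem bernoulliWeight_pos {p : ℝ} (hp : 0 < p) (hp1 : p < 1) (T : Finset ι) (x : ι → Bool) :
    0 < bernoulliWeight p T x :=
  prod_pos fun i _ => by split_ifs <;> linarith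

theorem inv_bernoulliWeight_le {p : ℝ} (hp : 0 < p) (hp1 : p < 1) (T : Finset ι)
    (x : ι → Bool) : (bernoulliWeight p T x)⁻¹ ≤ max (1 / p) (1 / (1 - p)) ^ #T := by
  unfold bernoulliWeight
  rw [← prod_inv_distrib, ← prod_const]
  refine prod_le_prod (fun i _ => inv_nonneg.2 (by split_ifs <;> linarith)) fun i _ => ?_
  split_ifs
  · exact (one_div p).symm ▸ le_max_left _ _
  · exact (one_div (1 - p)).symm ▸ le_max_right _ _

variable [DecidableEq ι]

def restrict (T : Finset ι) (x : ι → Bool) : ι → Bool :=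
  fun i => if i ∈ T then x i else false

@[simp]
theorem restrict_apply (T : Finset ι) (x : ι → Bool) (i : ι) :
    restrict T x i = if i ∈ T then x i else false := rfl

theorem restrict_restrict_of_subset {S T : Finset ι} (h : S ⊆ T) (x : ι → Bool) :
    restrict S (restrict T x) = restrict S x := by
  ext i
  by_cases hi : i ∈ S
  · simp [hi, h hi]
  · simp [hi]

variable [Fintype ι]

def supportedOn (T : Finset ι) : Finset (ι → Bool) :=
  univ.filter fun y => ∀ i ∉ T, y i = false

@[simp]
theorem mem_supportedOn {T : Finset ι} {y : ι → Bool} :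
    y ∈ supportedOn T ↔ ∀ i ∉ T, y i = false := by
  simp [supportedOn]

theorem supportedOn_eq_piFinset (T : Finset ι) :
    supportedOn T = Fintype.piFinset fun i => if i ∈ T then univ else {false} := by
  ext y
  simp only [mem_supportedOn, Fintype.mem_piFinset]
  refine forall_congr' fun i => ?_
  by_cases hi : i ∈ T <;> simp [hi]

theorem sum_bernoulliWeight (p : ℝ) (T : Finset ι) :
    ∑ x ∈ supportedOn T, bernoulliWeight p T x = 1 := by
  have h := prod_univ_sum (fun i => if i ∈ T then univ else {false})
    (fun i (b : Bool) => if i ∈ T then (if b then p else 1 - p) else 1)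
  rw [← supportedOn_eq_piFinset] at h
  simp only [prod_ite_mem, univ_inter] at h
  unfold bernoulliWeight
  rw [← h]
  refine prod_eq_one fun i _ => ?_
  by_cases hi : i ∈ T <;> simp [hi]

theorem restrict_mem_supportedOn (T : Finset ι) (x : ι → Bool) :
    restrict T x ∈ supportedOn T := by
  simp +contextual

@[simp]
theorem supportedOn_univ : supportedOn (univ : Finset ι) = univ := by
  ext; simp

theorem restrict_sup_of_mem_supportedOn {T U : Finset ι} (h : Disjoint T U) {y z : ι → Bool}
    (hy : y ∈ supportedOn T) (hz : z ∈ supportedOn U) : restrict T (y ⊔ z) = y := by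
  ext i
  by_cases hi : i ∈ T
  · simp [hi, mem_supportedOn.1 hz i (disjoint_left.1 h hi)]
  · simp [hi, mem_supportedOn.1 hy i hi]

theorem sum_supportedOn_union {T U : Finset ι} (h : Disjoint T U) (f : (ι → Bool) → ℝ) :
    ∑ x ∈ supportedOn (T ∪ U), f x = ∑ y ∈ supportedOn T, ∑ z ∈ supportedOn U, f (y ⊔ z) := by
  rw [← sum_product']
  refine sum_nbij' (fun x => (restrict T x, restrict U x)) (fun yz => yz.1 ⊔ yz.2)
    (fun x _ => mem_product.2 ⟨restrict_mem_supportedOn T x, restrict_mem_supportedOn U x⟩)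
    ?_ ?_ ?_ ?_
  · rintro ⟨y, z⟩ hyz
    simp only [mem_product, mem_supportedOn] at hyz
    simp +contextual [hyz.1, hyz.2]
  · intro x hx
    ext i
    by_cases hT : i ∈ T <;> by_cases hU : i ∈ U <;> simp_all
  · rintro ⟨y, z⟩ hyz
    rw [mem_product] at hyz
    simp only [Prod.mk.injEq]
    exact ⟨restrict_sup_of_mem_supportedOn h hyz.1 hyz.2,
      sup_comm y z ▸ restrict_sup_of_mem_supportedOn h.symm hyz.2 hyz.1⟩
  · intro x hx
    congr 1
    ext i
    by_cases hT : i ∈ T <;> by_cases hU : i ∈ U <;> simp_all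

theorem bernoulliWeight_sup_of_mem_supportedOn (p : ℝ) {T U : Finset ι} (h : Disjoint T U)
    {y : ι → Bool} (hy : y ∈ supportedOn T) (z : ι → Bool) :
    bernoulliWeight p U (y ⊔ z) = bernoulliWeight p U z :=
  prod_congr rfl fun i hi => by simp [mem_supportedOn.1 hy i (disjoint_right.1 h hi)]

theorem sum_mul_bernoulliWeight_compl (p : ℝ) (T : Finset ι) (F : (ι → Bool) → ℝ) :
    ∑ x, F (restrict T x) * bernoulliWeight p Tᶜ x = ∑ y ∈ supportedOn T, F y := by
  rw [← supportedOn_univ, ← union_compl T, sum_supportedOn_union disjoint_compl_right]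
  refine sum_congr rfl fun y hy => ?_
  rw [← mul_one (F y), ← sum_bernoulliWeight p Tᶜ, mul_sum]
  refine sum_congr rfl fun z hz => ?_
  rw [restrict_sup_of_mem_supportedOn disjoint_compl_right hy hz,
    bernoulliWeight_sup_of_mem_supportedOn p disjoint_compl_right hy]

theorem sum_restrict_mul_restrict_le_one {S S' : Finset ι} {φ ψ : (ι → Bool) → ℝ}
    (hφ0 : ∀ y, 0 ≤ φ y) (hψ0 : ∀ y, 0 ≤ ψ y)
    (hφ : ∑ y ∈ supportedOn S, φ y = 1) (hψ : ∑ y ∈ supportedOn S', ψ y = 1) :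
    ∑ w ∈ supportedOn (S ∪ S'), φ (restrict S w) * ψ (restrict S' w) ≤ 1 := by
  have hfiber : ∀ y ∈ supportedOn S, ∑ z ∈ supportedOn (S' \ S), ψ (restrict S' y ⊔ z) ≤ 1 := by
    intro y hy
    -- one fibre of the total mass of `ψ`, split along `S' = (S' ∩ S) ∪ (S' \ S)`
    have hsplit := sum_supportedOn_union (disjoint_sdiff_inter S' S).symm ψ
    rw [← inf_eq_inter, ← sup_eq_union, sup_inf_sdiff] at hsplit
    rw [← hψ, hsplit]
    refine single_le_sum (f := fun c => ∑ z ∈ supportedOn (S' \ S), ψ (c ⊔ z))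
      (fun c _ => sum_nonneg fun z _ => hψ0 _) ?_
    simp only [mem_supportedOn, restrict_apply]
    intro i hi
    by_cases h' : i ∈ S' <;> simp_all
  calc ∑ w ∈ supportedOn (S ∪ S'), φ (restrict S w) * ψ (restrict S' w)
      = ∑ y ∈ supportedOn S, φ y * ∑ z ∈ supportedOn (S' \ S), ψ (restrict S' y ⊔ z) := by
        rw [← union_sdiff_self_eq_union, sum_supportedOn_union disjoint_sdiff]
        refine sum_congr rfl fun y hy => ?_
        rw [mul_sum]
        refine sum_congr rfl fun z hz => ?_
        rw [restrict_sup_of_mem_supportedOn disjoint_sdiff hy hz]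
        congr 2
        ext i
        by_cases hi : i ∈ S'
        · simp [hi]
        · simp [hi, mem_supportedOn.1 hz i fun h => hi (mem_sdiff.1 h).1]
    _ ≤ ∑ y ∈ supportedOn S, φ y * 1 :=
        sum_le_sum fun y hy => mul_le_mul_of_nonneg_left (hfiber y hy) (hφ0 y)
    _ = 1 := by simp [hφ]

theorem bernoulliWeight_compl_mul_compl (p : ℝ) (S S' : Finset ι) (x : ι → Bool) :
    bernoulliWeight p Sᶜ x * bernoulliWeight p S'ᶜ x
      = bernoulliWeight p (S ∪ S')ᶜ x * bernoulliWeight p (S ∩ S')ᶜ x := by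
  unfold bernoulliWeight
  rw [compl_union, compl_inter, ← prod_union_inter, mul_comm]

theorem bernoulliWeight_mul_compl (p : ℝ) (T : Finset ι) (x : ι → Bool) :
    bernoulliWeight p T x * bernoulliWeight p Tᶜ x = bernoulliWeight p univ x :=
  prod_mul_prod_compl _ _

theorem sum_mul_div_bernoulliWeight_le {p : ℝ} (hp : 0 < p) (hp1 : p < 1) {S S' : Finset ι}
    {φ ψ : (ι → Bool) → ℝ} (hφ0 : ∀ y, 0 ≤ φ y) (hψ0 : ∀ y, 0 ≤ ψ y)
    (hφ : ∑ y ∈ supportedOn S, φ y = 1) (hψ : ∑ y ∈ supportedOn S', ψ y = 1) :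
    ∑ x, φ (restrict S x) * bernoulliWeight p Sᶜ x * (ψ (restrict S' x) * bernoulliWeight p S'ᶜ x)
        / bernoulliWeight p univ x
      ≤ max (1 / p) (1 / (1 - p)) ^ #(S ∩ S') := by
  set a := max (1 / p) (1 / (1 - p))
  have ha : 0 ≤ a := le_max_of_le_left (one_div_pos.2 hp).le
  have hpoint : ∀ x, φ (restrict S x) * bernoulliWeight p Sᶜ x
        * (ψ (restrict S' x) * bernoulliWeight p S'ᶜ x) / bernoulliWeight p univ x
      ≤ a ^ #(S ∩ S') * (φ (restrict S x) * ψ (restrict S' x) * bernoulliWeight p (S ∪ S')ᶜ x) := by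
    intro x
    have hpos := bernoulliWeight_pos hp hp1 (S ∩ S')ᶜ x
    have heq : φ (restrict S x) * bernoulliWeight p Sᶜ x
          * (ψ (restrict S' x) * bernoulliWeight p S'ᶜ x) / bernoulliWeight p univ x
        = (bernoulliWeight p (S ∩ S') x)⁻¹
          * (φ (restrict S x) * ψ (restrict S' x) * bernoulliWeight p (S ∪ S')ᶜ x) := by
      rw [← bernoulliWeight_mul_compl p (S ∩ S'), mul_mul_mul_comm,
        bernoulliWeight_compl_mul_compl]
      field_simp
    rw [heq]
    exact mul_le_mul_of_nonneg_right (inv_bernoulliWeight_le hp hp1 _ x)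
      (mul_nonneg (mul_nonneg (hφ0 _) (hψ0 _)) (bernoulliWeight_pos hp hp1 _ x).le)
  calc _ ≤ ∑ x, a ^ #(S ∩ S')
        * (φ (restrict S x) * ψ (restrict S' x) * bernoulliWeight p (S ∪ S')ᶜ x) :=
        sum_le_sum fun x _ => hpoint x
    _ = a ^ #(S ∩ S')
        * ∑ w ∈ supportedOn (S ∪ S'), φ (restrict S w) * ψ (restrict S' w) := by
        rw [← mul_sum, ← sum_mul_bernoulliWeight_compl p]
        simp only [restrict_restrict_of_subset subset_union_left,
          restrict_restrict_of_subset subset_union_right]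
    _ ≤ a ^ #(S ∩ S') :=
        mul_le_of_le_one_right (pow_nonneg ha _)
          (sum_restrict_mul_restrict_le_one hφ0 hψ0 hφ hψ)

end BoolCube

theorem four_mul_sq_sum_sub_le_sum_sq_div_sub_one {α : Type*} [Fintype α] {μ ν : α → ℝ}
    (hν : ∀ x, 0 < ν x) (hμ1 : ∑ x, μ x = 1) (hν1 : ∑ x, ν x = 1) (A : Finset α) :
    4 * (∑ x ∈ A, μ x - ∑ x ∈ A, ν x) ^ 2 ≤ ∑ x, μ x ^ 2 / ν x - 1 := by
  classical
  set s : α → ℝ := fun x => if x ∈ A then 1 else -1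
  have hsigned : ∑ x, s x * (μ x - ν x) = 2 * (∑ x ∈ A, μ x - ∑ x ∈ A, ν x) := by
    have hs : ∀ x, s x * (μ x - ν x) = 2 * (if x ∈ A then μ x - ν x else 0) - (μ x - ν x) := by
      intro x
      by_cases hx : x ∈ A <;> simp only [s, hx, if_true, if_false] <;> ring
    simp only [hs, sum_sub_distrib, ← mul_sum, sum_ite_mem, univ_inter, hμ1, hν1]
    ring
  have hchi : ∑ x, (μ x - ν x) ^ 2 / ν x = ∑ x, μ x ^ 2 / ν x - 1 := by
    have h : ∀ x, (μ x - ν x) ^ 2 / ν x = μ x ^ 2 / ν x - 2 * μ x + ν x := by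
      intro x
      field_simp [(hν x).ne']
      ring
    simp only [h, sum_add_distrib, sum_sub_distrib, ← mul_sum, hμ1, hν1]
    ring
  calc 4 * (∑ x ∈ A, μ x - ∑ x ∈ A, ν x) ^ 2 = (∑ x, s x * (μ x - ν x)) ^ 2 / ∑ x, ν x := by
        rw [hsigned, hν1]; ring
    _ ≤ ∑ x, (s x * (μ x - ν x)) ^ 2 / ν x := sq_sum_div_le_sum_sq_div _ _ fun x _ => hν x
    _ = ∑ x, (μ x - ν x) ^ 2 / ν x := by
        refine sum_congr rfl fun x _ => ?_
        by_cases hx : x ∈ A <;> simp only [s, hx, if_true, if_false, one_mul, neg_one_mul, neg_sq]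
    _ = ∑ x, μ x ^ 2 / ν x - 1 := hchi

theorem sum_sq_div_le_of_mixture {α β : Type*} [Fintype α] [Fintype β] {μ ν : α → ℝ}
    {w : β → ℝ} {m : β → α → ℝ} {K : β → β → ℝ} (hμ : ∀ x, μ x = ∑ b, w b * m b x)
    (hw : ∀ b, 0 ≤ w b) (hK : ∀ b b', ∑ x, m b x * m b' x / ν x ≤ K b b') :
    ∑ x, μ x ^ 2 / ν x ≤ ∑ b, ∑ b', w b * w b' * K b b' := by
  have hexpand : ∑ x, μ x ^ 2 / ν x
      = ∑ b, ∑ b', w b * w b' * ∑ x, m b x * m b' x / ν x := by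
    have hx : ∀ x, μ x ^ 2 / ν x = ∑ b, ∑ b', w b * w b' * (m b x * m b' x / ν x) := by
      intro x
      rw [hμ, sq, sum_mul_sum, sum_div]
      refine sum_congr rfl fun b _ => ?_
      rw [sum_div]
      exact sum_congr rfl fun b' _ => by ring
    simp only [hx, mul_sum]
    rw [sum_comm]
    exact sum_congr rfl fun b _ => sum_comm
  rw [hexpand]
  exact sum_le_sum fun b _ => sum_le_sum fun b' _ =>
    mul_le_mul_of_nonneg_left (hK b b') (mul_nonneg (hw b) (hw b'))

theorem pow_card_eq_sum_powerset {ι R : Type*} [CommRing R] (a : R) (I : Finset ι) :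
    a ^ #I = ∑ B ∈ I.powerset, (a - 1) ^ #B := by
  simpa using prod_one_add (f := fun _ => a - 1) I

theorem sum_sum_mul_pow_card_inter {ι R : Type*} [Fintype ι] [DecidableEq ι] [CommRing R]
    (w : Finset ι → R) (a : R) :
    ∑ S, ∑ S', w S * w S' * a ^ #(S ∩ S')
      = ∑ B, (a - 1) ^ #B * (∑ S, if B ⊆ S then w S else 0) ^ 2 := by
  have h : ∀ S S', w S * w S' * a ^ #(S ∩ S')
      = ∑ B, (a - 1) ^ #B * ((if B ⊆ S then w S else 0) * (if B ⊆ S' then w S' else 0)) := by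
    intro S S'
    rw [pow_card_eq_sum_powerset, mul_sum, ← univ_inter (powerset _), ← sum_ite_mem]
    refine sum_congr rfl fun B _ => ?_
    simp only [mem_powerset, subset_inter_iff]
    by_cases hS : B ⊆ S <;> by_cases hS' : B ⊆ S' <;> simp [hS, hS', mul_comm]
  simp only [h]
  rw [sum_comm]
  refine (sum_congr rfl fun S _ => sum_comm).trans (sum_comm.trans (sum_congr rfl fun B _ => ?_))
  simp only [sq, sum_mul, mul_sum]

theorem sum_sum_mul_pow_card_inter_le_exp {ι : Type*} [Fintype ι] [DecidableEq ι]
    {w : Finset ι → ℝ} (hw : ∀ S, 0 ≤ w S)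
    (hND : ∀ A : Finset ι,
      (∑ S, if A ⊆ S then w S else 0) ≤ ∏ i ∈ A, ∑ S, if i ∈ S then w S else 0)
    {a : ℝ} (ha : 1 ≤ a) :
    ∑ S, ∑ S', w S * w S' * a ^ #(S ∩ S')
      ≤ Real.exp ((a - 1) * ∑ i, (∑ S, if i ∈ S then w S else 0) ^ 2) := by
  set q : ι → ℝ := fun i => ∑ S, if i ∈ S then w S else 0
  have hup : ∀ B, (a - 1) ^ #B * (∑ S, if B ⊆ S then w S else 0) ^ 2
      ≤ ∏ i ∈ B, (a - 1) * q i ^ 2 := by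
    intro B
    have h0 : 0 ≤ ∑ S, if B ⊆ S then w S else 0 :=
      sum_nonneg fun S _ => by split_ifs <;> simp [hw S]
    rw [prod_mul_distrib, prod_const, prod_pow]
    exact mul_le_mul_of_nonneg_left (pow_le_pow_left₀ h0 (hND B) 2)
      (pow_nonneg (sub_nonneg.2 ha) _)
  calc ∑ S, ∑ S', w S * w S' * a ^ #(S ∩ S')
      = ∑ B, (a - 1) ^ #B * (∑ S, if B ⊆ S then w S else 0) ^ 2 :=
        sum_sum_mul_pow_card_inter w a
    _ ≤ ∑ B, ∏ i ∈ B, (a - 1) * q i ^ 2 := sum_le_sum fun B _ => hup B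
    _ = ∏ i, (1 + (a - 1) * q i ^ 2) := by rw [prod_one_add, powerset_univ]
    _ ≤ Real.exp ((a - 1) * ∑ i, q i ^ 2) := by
        rw [mul_sum]
        exact Real.prod_one_add_le_exp_sum _ fun i =>
          mul_nonneg (sub_nonneg.2 ha) (sq_nonneg _)

open BoolCube

/-- Negatively dependent perturbation of a product measure. `μ` is obtained by sampling a
random subset `S ⊆ [n]` with law `μt` (whose indicator vector is negatively dependent), then
sampling the coordinates in `S` by an arbitrary law `φ S` (a distribution on configurations
supported on `S`) and the coordinates outside `S` as i.i.d. Bernoulli(p). With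
`ν = Ber(p)^⊗n` and `a = max(1/p, 1/(1−p))`:
`4 d_TV(μ,ν)² ≤ exp((a−1) ∑_i P[i ∈ S]²) − 1`. -/
theorem nd_perturbation_of_product (n : ℕ) (p : ℝ) (hp : 0 < p) (hp1 : p < 1)
    (μt : Finset (Fin n) → ℝ) (hμt0 : ∀ S, 0 ≤ μt S) (hμt1 : ∑ S, μt S = 1)
    (hND : ∀ A : Finset (Fin n),
      (∑ S, if A ⊆ S then μt S else 0) ≤ ∏ i ∈ A, ∑ S, if i ∈ S then μt S else 0)
    (φ : Finset (Fin n) → (Fin n → Bool) → ℝ)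
    (hφ0 : ∀ S y, 0 ≤ φ S y)
    (hφ1 : ∀ S : Finset (Fin n),
      ∑ y ∈ Finset.univ.filter (fun y : Fin n → Bool => ∀ i ∉ S, y i = false), φ S y = 1)
    (μ : (Fin n → Bool) → ℝ)
    (hμ : ∀ x, μ x = ∑ S, μt S * φ S (fun i => if i ∈ S then x i else false)
      * ∏ i ∈ Sᶜ, (if x i then p else 1 - p))
    (ν : (Fin n → Bool) → ℝ)
    (hν : ∀ x, ν x = ∏ i, (if x i then p else 1 - p))
    (a : ℝ) (ha : a = max (1 / p) (1 / (1 - p))) :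
    ∀ A : Finset (Fin n → Bool),
      4 * (∑ x ∈ A, μ x - ∑ x ∈ A, ν x) ^ 2
        ≤ Real.exp ((a - 1) * ∑ i, (∑ S, if i ∈ S then μt S else 0) ^ 2) - 1 := by
  intro A
  have hφ1' : ∀ S, ∑ y ∈ supportedOn S, φ S y = 1 := fun S => by convert hφ1 S; ext; simp
  have hν' : ∀ x, ν x = bernoulliWeight p univ x := hν
  have hμ' : ∀ x, μ x = ∑ S, μt S * (φ S (restrict S x) * bernoulliWeight p Sᶜ x) := fun x => by
    simp only [hμ, mul_assoc]; rfl
  have hμ1 : ∑ x, μ x = 1 := by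
    simp only [hμ']
    rw [sum_comm]
    simp only [← mul_sum, sum_mul_bernoulliWeight_compl, hφ1', mul_one, hμt1]
  have hν1 : ∑ x, ν x = 1 := by
    simpa only [hν', supportedOn_univ] using sum_bernoulliWeight p (univ : Finset (Fin n))
  have hpair : ∀ S S', ∑ x, φ S (restrict S x) * bernoulliWeight p Sᶜ x
      * (φ S' (restrict S' x) * bernoulliWeight p S'ᶜ x) / ν x ≤ a ^ #(S ∩ S') := fun S S' => by
    simpa only [hν', ha] using
      sum_mul_div_bernoulliWeight_le hp hp1 (hφ0 S) (hφ0 S') (hφ1' S) (hφ1' S')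
  have ha1 : 1 ≤ a := ha ▸ le_max_of_le_left (one_le_one_div hp hp1.le)
  calc 4 * (∑ x ∈ A, μ x - ∑ x ∈ A, ν x) ^ 2 ≤ ∑ x, μ x ^ 2 / ν x - 1 :=
        four_mul_sq_sum_sub_le_sum_sq_div_sub_one
          (fun x => hν' x ▸ bernoulliWeight_pos hp hp1 univ x) hμ1 hν1 A
    _ ≤ ∑ S, ∑ S', μt S * μt S' * a ^ #(S ∩ S') - 1 := by
        gcongr
        exact sum_sq_div_le_of_mixture hμ' hμt0 hpair
    _ ≤ Real.exp ((a - 1) * ∑ i, (∑ S, if i ∈ S then μt S else 0) ^ 2) - 1 := by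
        gcongr
        exact sum_sum_mul_pow_card_inter_le_exp hμt0 hND ha1
end
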